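/- arXiv:2402.05754 — 2 statements merged into one kernel-verified Lean document; each statement's English description precedes it below -/
import Mathlib

section
/- Let d ∈ V and set ε = +1 if Tr(ϑ_0(d)) = 0 and ε = −1 if Tr(ϑ_0(d)) = 1. Then the number of vectors x ∈ V with Tr(ϑ_d(x)) = 0 equals (q^{2m} + ε·q^m)/2 = 2^{2hm−1} + ε·2^{hm−1}. (That is, the F_2-valued quadratic form Tr∘ϑ_d on V, viewed as an F_2-vector space of dimension 2hm, is non-degenerate of the same type as ϑ_d.) -/
open Finset

noncomputable section

/-- The symplectic bilinear form `⟨u,v⟩ = ∑_{i<m} (u_i v_{m+i} + u_{m+i} v_i)` on `F^{2m}`,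
`F = GF(2^h)`. -/
def symp (h m : ℕ) (u v : Fin (2*m) → GaloisField 2 h) : GaloisField 2 h :=
  ∑ i : Fin m, (u ⟨i.1, by omega⟩ * v ⟨m + i.1, by omega⟩ +
    u ⟨m + i.1, by omega⟩ * v ⟨i.1, by omega⟩)

/-- The quadratic form `ϑ_0(u) = ∑_{i<m} u_i u_{m+i}`. -/
def th0 (h m : ℕ) (u : Fin (2*m) → GaloisField 2 h) : GaloisField 2 h :=
  ∑ i : Fin m, u ⟨i.1, by omega⟩ * u ⟨m + i.1, by omega⟩

/-- The quadratic form `ϑ_a(u) = ϑ_0(u) + ⟨a,u⟩²`. -/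
def th (h m : ℕ) (a u : Fin (2*m) → GaloisField 2 h) : GaloisField 2 h :=
  th0 h m u + (symp h m a u)^2

/-- The absolute trace `GF(2^h) → F_2`. -/
def tr (h : ℕ) (x : GaloisField 2 h) : ZMod 2 :=
  Algebra.trace (ZMod 2) (GaloisField 2 h) x

end

/-! Since `ϑ₀(x + d) = ϑ₀(x) + ϑ₀(d) + ⟨d, x⟩` and `Tr(y²) = Tr(y)`, translation by `d` turns
`Tr ϑ_d(x) = 0` into `Tr ϑ₀(y) = Tr ϑ₀(d)`. Splitting `y = (u, v) ∈ F^m × F^m` gives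
`ϑ₀(y) = u ⬝ v`. For `u ≠ 0` the map `v ↦ Tr(u ⬝ v)` is a nonzero homomorphism to `𝔽₂`, so each
value is taken on exactly half of `F^m`; for `u = 0` it vanishes identically. Summing over `u`
gives `2 · #{Tr(u ⬝ v) = c} = q^{2m} ± q^m`, with the sign `+` exactly when `c = 0`. -/

lemma Algebra.trace_pow_card {K L : Type*} [Field K] [Fintype K] [Field L] [Finite L]
    [Algebra K L] (x : L) : Algebra.trace K L (x ^ Fintype.card K) = Algebra.trace K L x :=
  Algebra.trace_eq_of_algEquiv (FiniteField.frobeniusAlgEquivOfAlgebraic K L) x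

lemma AddMonoidHom.two_mul_card_fiber_eq_card {G : Type*} [AddGroup G] [Fintype G]
    (f : G →+ ZMod 2) (hf : f ≠ 0) (c : ZMod 2) :
    2 * #{g | f g = c} = Fintype.card G := by
  have ne_zero_iff : ∀ a : ZMod 2, a ≠ 0 ↔ a = 1 := by decide
  obtain ⟨g₁, hg₁⟩ := DFunLike.ne_iff.mp hf
  have mem_range : ∀ c : ZMod 2, c ∈ Set.range f := by
    intro c; fin_cases c
    · exact ⟨0, map_zero f⟩
    · exact ⟨g₁, (ne_zero_iff _).mp hg₁⟩
  have hsplit := card_filter_add_card_filter_not (s := univ) (fun g => f g = 0)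
  simp only [ne_zero_iff, card_univ] at hsplit
  have h01 := card_fiber_eq_of_mem_range f (mem_range 0) (mem_range 1)
  have hc := card_fiber_eq_of_mem_range f (mem_range c) (mem_range 0)
  omega

section TraceDotProduct

variable {F ι : Type*} [Field F] [Fintype F] [Algebra (ZMod 2) F] [Fintype ι] [DecidableEq ι]

noncomputable def traceDotProduct (u : ι → F) : (ι → F) →+ ZMod 2 :=
  AddMonoidHom.mk' (fun v => Algebra.trace (ZMod 2) F (u ⬝ᵥ v)) fun v w => by
    rw [dotProduct_add, map_add]

lemma traceDotProduct_ne_zero {u : ι → F} (hu : u ≠ 0) : traceDotProduct u ≠ 0 := by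
  classical
  obtain ⟨i, hi⟩ := Function.ne_iff.mp hu
  obtain ⟨t, ht⟩ := Algebra.trace_surjective (ZMod 2) F 1
  refine DFunLike.ne_iff.mpr ⟨Pi.single i (t / u i), ?_⟩
  simp [traceDotProduct, dotProduct_single, mul_div_cancel₀ _ hi, ht]

lemma card_traceDotProduct_zero (c : ZMod 2) :
    #{v : ι → F | traceDotProduct 0 v = c} = if c = 0 then Fintype.card (ι → F) else 0 := by
  split_ifs with hc <;> simp [traceDotProduct, hc, eq_comm]

lemma two_mul_card_trace_dotProduct_eq (c : ZMod 2) :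
    (2 * #{p : (ι → F) × (ι → F) | Algebra.trace (ZMod 2) F (p.1 ⬝ᵥ p.2) = c} : ℤ)
      = Fintype.card (ι → F) ^ 2 + (if c = 0 then 1 else -1) * Fintype.card (ι → F) := by
  classical
  have hfib : #{p : (ι → F) × (ι → F) | Algebra.trace (ZMod 2) F (p.1 ⬝ᵥ p.2) = c}
      = ∑ u : ι → F, #{v | traceDotProduct u v = c} := by
    simp only [card_filter, Fintype.sum_prod_type]; rfl
  have hrest : ∑ u ∈ ({0}ᶜ : Finset (ι → F)), 2 * #{v : ι → F | traceDotProduct u v = c}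
      = (Fintype.card (ι → F) - 1) * Fintype.card (ι → F) := by
    rw [sum_congr rfl fun u hu => (traceDotProduct u).two_mul_card_fiber_eq_card
      (traceDotProduct_ne_zero (by simpa using hu)) c, sum_const, card_compl, card_singleton,
      smul_eq_mul]
  have hsum := Fintype.sum_eq_add_sum_compl (0 : ι → F)
    fun u => 2 * #{v : ι → F | traceDotProduct u v = c}
  rw [← mul_sum, ← hfib, hrest, card_traceDotProduct_zero] at hsum
  have hpos : 1 ≤ Fintype.card (ι → F) := Fintype.card_pos
  have hsumℤ := congrArg (Nat.cast : ℕ → ℤ) hsum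
  split_ifs at hsumℤ ⊢ <;> push_cast [hpos] at hsumℤ <;> linear_combination hsumℤ

end TraceDotProduct

def splitHalvesEquiv (α : Type*) (m : ℕ) : (Fin (2 * m) → α) ≃ (Fin m → α) × (Fin m → α) :=
  ((finCongr (two_mul m)).arrowCongr (Equiv.refl α)).trans (Fin.appendEquiv m m).symm

section Symplectic

variable {h m : ℕ}

lemma th0_eq_dotProduct (y : Fin (2 * m) → GaloisField 2 h) :
    th0 h m y = (splitHalvesEquiv _ m y).1 ⬝ᵥ (splitHalvesEquiv _ m y).2 := rfl

lemma th0_add (x d : Fin (2 * m) → GaloisField 2 h) :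
    th0 h m (x + d) = th0 h m x + th0 h m d + symp h m d x := by
  simp only [th0, symp, Pi.add_apply, ← sum_add_distrib]
  exact sum_congr rfl fun i _ => by ring

lemma tr_add (x y : GaloisField 2 h) : tr h (x + y) = tr h x + tr h y :=
  map_add _ x y

lemma tr_sq (x : GaloisField 2 h) : tr h (x ^ 2) = tr h x :=
  Algebra.trace_pow_card (K := ZMod 2) x

lemma tr_th0_add (d x : Fin (2 * m) → GaloisField 2 h) :
    tr h (th0 h m (x + d)) = tr h (th h m d x) + tr h (th0 h m d) := by
  rw [th0_add, th, tr_add, tr_add, tr_add, tr_sq]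
  abel

lemma card_tr_th_eq_zero (d : Fin (2 * m) → GaloisField 2 h) :
    Nat.card {x : Fin (2 * m) → GaloisField 2 h // tr h (th h m d x) = 0}
      = Nat.card {y : Fin (2 * m) → GaloisField 2 h // tr h (th0 h m y) = tr h (th0 h m d)} :=
  Nat.card_congr <| (Equiv.addRight d).subtypeEquiv fun x => by
    rw [Equiv.coe_addRight, tr_th0_add, add_eq_right]

lemma two_mul_card_tr_th0_eq (hh : h ≠ 0) (c : ZMod 2) :
    2 * (Nat.card {y : Fin (2 * m) → GaloisField 2 h // tr h (th0 h m y) = c} : ℤ)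
      = (2 ^ h) ^ (2 * m) + (if c = 0 then 1 else -1) * (2 ^ h) ^ m := by
  have := Fintype.ofFinite (GaloisField 2 h)
  have hcard : Fintype.card (Fin m → GaloisField 2 h) = (2 ^ h) ^ m := by
    rw [Fintype.card_fun, Fintype.card_fin, ← Nat.card_eq_fintype_card, GaloisField.card 2 h hh]
  rw [Nat.card_congr ((splitHalvesEquiv _ m).subtypeEquiv (q := fun p => tr h (p.1 ⬝ᵥ p.2) = c)
      fun y => by rw [th0_eq_dotProduct]),
    Nat.card_eq_fintype_card, Fintype.card_subtype]
  unfold tr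
  rw [two_mul_card_trace_dotProduct_eq, hcard]
  push_cast
  ring

end Symplectic

/-- The number of `x` with `Tr(ϑ_d(x)) = 0` equals `(q^{2m} + ε q^m)/2 = 2^{2hm-1} + ε 2^{hm-1}`,
where `ε = ±1` is the type of `ϑ_d`. -/
theorem stmt_11 (h m : ℕ) (hh : 1 ≤ h) (hm : 1 ≤ m)
    (d : Fin (2*m) → GaloisField 2 h) :
    let q : ℤ := 2^h
    let ε : ℤ := if tr h (th0 h m d) = 0 then 1 else -1
    2 * (Nat.card {x : Fin (2*m) → GaloisField 2 h // tr h (th h m d x) = 0} : ℤ)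
        = q^(2*m) + ε * q^m
    ∧ (Nat.card {x : Fin (2*m) → GaloisField 2 h // tr h (th h m d x) = 0} : ℤ)
        = 2^(2*h*m - 1) + ε * 2^(h*m - 1) := by
  intro q ε
  have hcount : 2 * (Nat.card {x : Fin (2*m) → GaloisField 2 h // tr h (th h m d x) = 0} : ℤ)
      = q^(2*m) + ε * q^m := by
    rw [card_tr_th_eq_zero, two_mul_card_tr_th0_eq (by omega)]
  refine ⟨hcount, ?_⟩
  obtain ⟨k, hk⟩ : ∃ k, h * m = k + 1 := ⟨h * m - 1, by have := Nat.mul_le_mul hh hm; omega⟩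
  have hq : q ^ m = 2 ^ (k + 1) := by rw [← pow_mul, hk]
  have hq2 : q ^ (2 * m) = 2 ^ (2 * k + 2) := by rw [← pow_mul, mul_left_comm, hk]; ring
  rw [show 2 * h * m - 1 = 2 * k + 1 by rw [mul_assoc, hk]; omega, show h * m - 1 = k by omega]
  rw [hq, hq2, pow_succ _ (2 * k + 1), pow_succ _ k] at hcount
  linarith
end

section
/- For all a, b ∈ V, all γ ∈ F with γ ≠ 0, and all u ∈ V: ϑ_a(u + γ²·⟨u, a+b⟩·(a+b)) = ϑ_b(u) + (1 + γ² + γ⁴·ϑ_a(a+b))·⟨a+b, u⟩². (This is the formula for the action of the symplectic transvection T_{γ(a+b)} on the quadratic form ϑ_a.) -/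
open Finset

section QuadraticForms

variable {h m : ℕ}

lemma symp_comm (u v : Fin (2*m) → GaloisField 2 h) : symp h m u v = symp h m v u := by
  unfold symp
  exact Finset.sum_congr rfl fun _ _ => by ring

lemma symp_add_left (a b u : Fin (2*m) → GaloisField 2 h) :
    symp h m (a + b) u = symp h m a u + symp h m b u := by
  unfold symp
  rw [← Finset.sum_add_distrib]
  exact Finset.sum_congr rfl fun _ _ => by simp only [Pi.add_apply]; ring

lemma symp_add_right (a u v : Fin (2*m) → GaloisField 2 h) :
    symp h m a (u + v) = symp h m a u + symp h m a v := by
  rw [symp_comm, symp_add_left, symp_comm u, symp_comm v]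

lemma symp_smul_right (t : GaloisField 2 h) (a v : Fin (2*m) → GaloisField 2 h) :
    symp h m a (t • v) = t * symp h m a v := by
  unfold symp
  rw [Finset.mul_sum]
  exact Finset.sum_congr rfl fun _ _ => by simp only [Pi.smul_apply, smul_eq_mul]; ring

lemma th0_add_smul (t : GaloisField 2 h) (u c : Fin (2*m) → GaloisField 2 h) :
    th0 h m (u + t • c) = th0 h m u + t ^ 2 * th0 h m c + t * symp h m u c := by
  unfold th0 symp
  rw [Finset.mul_sum, Finset.mul_sum, ← Finset.sum_add_distrib, ← Finset.sum_add_distrib]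
  exact Finset.sum_congr rfl fun _ _ => by simp only [Pi.add_apply, Pi.smul_apply, smul_eq_mul]; ring

/-- Since squaring is additive in characteristic 2, every `ϑ_a` has the same polar form `⟨·,·⟩`
as `ϑ_0`. -/
lemma th_add_smul (t : GaloisField 2 h) (a u c : Fin (2*m) → GaloisField 2 h) :
    th h m a (u + t • c) = th h m a u + t ^ 2 * th h m a c + t * symp h m u c := by
  simp only [th, th0_add_smul, symp_add_right, symp_smul_right, CharTwo.add_sq]
  ring

lemma th_eq_th_add_symp_sq (a b u : Fin (2*m) → GaloisField 2 h) :
    th h m a u = th h m b u + symp h m (a + b) u ^ 2 := by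
  simp only [th, symp_add_left, CharTwo.add_sq]
  linear_combination (-symp h m b u ^ 2) * (CharTwo.two_eq_zero (R := GaloisField 2 h))

end QuadraticForms

theorem stmt_18_general (h m : ℕ)
    (a b : Fin (2*m) → GaloisField 2 h) (γ : GaloisField 2 h)
    (u : Fin (2*m) → GaloisField 2 h) :
    th h m a (u + (γ^2 * symp h m u (a + b)) • (a + b))
      = th h m b u + (1 + γ^2 + γ^4 * th h m a (a + b)) * (symp h m (a + b) u)^2 := by
  rw [th_add_smul, th_eq_th_add_symp_sq a b u, symp_comm u]
  ring

/-- Action of the symplectic transvection `T_{γ(a+b)}` on the quadratic form `ϑ_a`: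
`ϑ_a(T_{γ(a+b)} u) = ϑ_b(u) + (1 + γ² + γ⁴ ϑ_a(a+b))·⟨a+b,u⟩²`. -/
theorem stmt_18 (h m : ℕ) (hh : 1 ≤ h) (hm : 1 ≤ m)
    (a b : Fin (2*m) → GaloisField 2 h) (γ : GaloisField 2 h) (hγ : γ ≠ 0)
    (u : Fin (2*m) → GaloisField 2 h) :
    th h m a (u + (γ^2 * symp h m u (a + b)) • (a + b))
      = th h m b u + (1 + γ^2 + γ^4 * th h m a (a + b)) * (symp h m (a + b) u)^2 :=
  stmt_18_general h m a b γ u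
end
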